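/- There exists a polynomial F ∈ ℂ[X,Y] of total degree 3 which is irreducible in ℂ[X,Y] and satisfies: F(0,0) = F(2,3) = F(−2,3) = 0; F(1,1) = 0 and the derivative at t = 0 of t ↦ F(1+t,1+t) vanishes; F(−1,1) = 0 and the derivative at t = 0 of t ↦ F(−1−t,1+t) vanishes; F(0,5) = 0 and (∂F/∂X)(0,5) = 0. -/

import Mathlib

/-!
Viewed in `ℂ[Y][X]`, the cubic `F = (2Y + 6)X² + Y(3Y² - 16Y + 5)` is Eisenstein at the prime `Y`:
`Y` does not divide the leading coefficient, divides the constant term exactly once, and the two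
coefficients are coprime, so `F` is primitive. Everything else is evaluation.
-/

namespace Polynomial

theorem irreducible_C_mul_X_pow_add_C {R : Type*} [CommRing R] [IsDomain R] {a c p : R} {n : ℕ}
    (hn : n ≠ 0) (hp : Prime p) (hpa : ¬p ∣ a) (hpc : p ∣ c) (hpc2 : ¬p ^ 2 ∣ c)
    (hac : IsCoprime a c) : Irreducible (C a * X ^ n + C c) := by
  have ha : a ≠ 0 := fun h => hpa (h ▸ dvd_zero p)
  have hcoeff0 : (C a * X ^ n + C c).coeff 0 = c := by simp [coeff_C, hn.symm]
  have hdeg : (C a * X ^ n + C c).degree = (n : WithBot ℕ) := by compute_degree!; simpa [hn]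
  have hlead : (C a * X ^ n + C c).leadingCoeff = a := by
    rw [leadingCoeff, natDegree_eq_of_degree_eq_some hdeg]
    simp [coeff_C, hn]
  refine irreducible_of_eisenstein_criterion ((Ideal.span_singleton_prime hp.ne_zero).mpr hp)
    ?_ ?_ ?_ ?_ ?_
  · rwa [hlead, Ideal.mem_span_singleton]
  · intro k hk
    rw [hdeg, Nat.cast_lt] at hk
    rcases Nat.eq_zero_or_pos k with rfl | hk0
    · rwa [hcoeff0, Ideal.mem_span_singleton]
    · simp [coeff_C, hk.ne, hk0.ne']
  · rw [hdeg]; exact_mod_cast Nat.pos_of_ne_zero hn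
  · rwa [hcoeff0, Ideal.span_singleton_pow, Ideal.mem_span_singleton]
  · rw [isPrimitive_iff_isUnit_of_C_dvd]
    intro r hr
    refine hac.isUnit_of_dvd' ?_ ?_
    · simpa [coeff_C, hn] using (C_dvd_iff_dvd_coeff r _).mp hr n
    · simpa [hcoeff0] using (C_dvd_iff_dvd_coeff r _).mp hr 0

end Polynomial

namespace MvPolynomial

variable {σ R : Type*} [CommSemiring R]

theorem IsHomogeneous.totalDegree_add_of_totalDegree_lt {φ ψ : MvPolynomial σ R} {n : ℕ}
    (hφ : φ.IsHomogeneous n) (hφ0 : φ ≠ 0) (hψ : ψ.totalDegree < n) :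
    (φ + ψ).totalDegree = n := by
  rw [totalDegree_add_eq_left_of_totalDegree_lt (hφ.totalDegree hφ0 ▸ hψ), hφ.totalDegree hφ0]

end MvPolynomial

open MvPolynomial

noncomputable def tangentCubic : MvPolynomial (Fin 2) ℂ :=
  (2 * X 1 + 6) * X 0 ^ 2 + X 1 * (3 * X 1 ^ 2 - 16 * X 1 + 5)

theorem finSuccEquiv_tangentCubic :
    finSuccEquiv ℂ 1 tangentCubic =
      Polynomial.C (2 * X 0 + 6) * Polynomial.X ^ 2 +
        Polynomial.C (X 0 * (3 * X 0 ^ 2 - 16 * X 0 + 5)) := by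
  have hX1 : finSuccEquiv ℂ 1 (X 1) = Polynomial.C (X 0) := finSuccEquiv_X_succ (j := 0)
  simp only [tangentCubic, map_add, map_sub, map_mul, map_pow, map_ofNat, finSuccEquiv_X_zero, hX1]

theorem irreducible_tangentCubic : Irreducible tangentCubic := by
  rw [← MulEquiv.irreducible_iff (finSuccEquiv ℂ 1), finSuccEquiv_tangentCubic]
  have hX : ∀ {f : MvPolynomial (Fin 1) ℂ}, X 0 ∣ f → constantCoeff f = 0 := fun h => by
    simpa using map_dvd constantCoeff h
  refine Polynomial.irreducible_C_mul_X_pow_add_C two_ne_zero X_prime ?_ (dvd_mul_right _ _) ?_ ?_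
  · intro h; simpa [map_ofNat constantCoeff] using hX h
  · rw [pow_two]; intro h
    simpa [map_ofNat constantCoeff] using hX ((mul_dvd_mul_iff_left (X_prime.ne_zero)).mp h)
  · -- `(3Y² - 25Y + 80)(2Y + 6) - 2Y(3Y² - 16Y + 5) = 480`
    have h480 : C (1 / 480 : ℂ) * 480 = (1 : MvPolynomial (Fin 1) ℂ) := by
      rw [← map_ofNat C 480, ← C_mul]; norm_num
    exact ⟨C (1 / 480) * (3 * X 0 ^ 2 - 25 * X 0 + 80), -2 * C (1 / 480),
      by linear_combination h480⟩

theorem totalDegree_tangentCubic : tangentCubic.totalDegree = 3 := by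
  have hcubic : (X 1 * (C 2 * X 0 ^ 2 + C 3 * X 1 ^ 2) : MvPolynomial (Fin 2) ℂ).IsHomogeneous 3 :=
    (isHomogeneous_X ℂ 1).mul
      ((isHomogeneous_C_mul_X_pow 2 0 2).add (isHomogeneous_C_mul_X_pow 3 1 2))
  have hquad : (C 6 * X 0 ^ 2 - C 16 * X 1 ^ 2 : MvPolynomial (Fin 2) ℂ).IsHomogeneous 2 :=
    (isHomogeneous_C_mul_X_pow 6 0 2).sub (isHomogeneous_C_mul_X_pow 16 1 2)
  have hlin : (C 5 * X 1 : MvPolynomial (Fin 2) ℂ).IsHomogeneous 1 := isHomogeneous_C_mul_X 5 1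
  have hcubic_ne : (X 1 * (C 2 * X 0 ^ 2 + C 3 * X 1 ^ 2) : MvPolynomial (Fin 2) ℂ) ≠ 0 :=
    fun h => by simpa using congrArg (eval ![0, 1]) h
  have hsplit : tangentCubic =
      X 1 * (C 2 * X 0 ^ 2 + C 3 * X 1 ^ 2) + (C 6 * X 0 ^ 2 - C 16 * X 1 ^ 2 + C 5 * X 1) := by
    simp only [tangentCubic, map_ofNat]
    ring
  rw [hsplit, hcubic.totalDegree_add_of_totalDegree_lt hcubic_ne]
  exact (totalDegree_add _ _).trans_lt <| max_lt
    (hquad.totalDegree_le.trans_lt (by norm_num)) (hlin.totalDegree_le.trans_lt (by norm_num))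

/-- There is an irreducible polynomial F ∈ ℂ[X,Y] of total
degree 3 through (0,0), (2,3), (−2,3), tangent to the line Y = X at (1,1),
tangent to the line Y = −X at (−1,1), and tangent to the horizontal line
Y = 5 at (0,5). -/
theorem stmt_8 :
    ∃ F : MvPolynomial (Fin 2) ℂ, F.totalDegree = 3 ∧ Irreducible F ∧
      MvPolynomial.eval ![0, 0] F = 0 ∧
      MvPolynomial.eval ![2, 3] F = 0 ∧
      MvPolynomial.eval ![-2, 3] F = 0 ∧
      (MvPolynomial.eval ![1, 1] F = 0 ∧
        Polynomial.eval (0 : ℂ) (Polynomial.derivative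
          (MvPolynomial.aeval
            (![1 + Polynomial.X, 1 + Polynomial.X] : Fin 2 → Polynomial ℂ) F)) = 0) ∧
      (MvPolynomial.eval ![-1, 1] F = 0 ∧
        Polynomial.eval (0 : ℂ) (Polynomial.derivative
          (MvPolynomial.aeval
            (![-1 - Polynomial.X, 1 + Polynomial.X] : Fin 2 → Polynomial ℂ) F)) = 0) ∧
      (MvPolynomial.eval ![0, 5] F = 0 ∧
        MvPolynomial.eval ![0, 5] (MvPolynomial.pderiv 0 F) = 0) := by
  refine ⟨tangentCubic, totalDegree_tangentCubic, irreducible_tangentCubic, ?_⟩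
  simp [tangentCubic, Polynomial.derivative_pow, ← map_ofNat C]
  norm_num
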